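/- arXiv:2206.11978 — 6 statements merged into one kernel-verified Lean document; each statement's English description precedes it below -/
import Mathlib

section
/- Let I, T, L, N ≥ 1 be positive integers, let X : {1,…,I}×{1,…,T} → {0,1} be a treatment schedule with design constants U = Σ_{i,j} X_{ij}, V = Σ_i (Σ_j X_{ij})², W = Σ_j (Σ_i X_{ij})², and let Σ_b, Σ_s, Σ_ε be L×L symmetric positive definite real matrices. Set S = Σ_s + N^{-1}·Σ_ε, let Ṽ = I_T ⊗ S + J_T ⊗ Σ_b (a TL×TL matrix), and for each cluster i let Z_i = (I_T | X_i) ⊗ I_L, where (I_T | X_i) is the T×(T+1) matrix obtained by appending to I_T the column X_i = (X_{i1},…,X_{iT})^⊤. Let G = Σ_{i=1}^I Z_i^⊤ Ṽ^{-1} Z_i, a (T+1)L×(T+1)L matrix. If G is invertible and the L×L matrix (I·T·U − T·W + U² − I·V)·S^{-1} − (U² − I·V)·(T·Σ_b + S)^{-1} is invertible, then the bottom-right L×L block of G^{-1} equals I·T·[(I·T·U − T·W + U² − I·V)·S^{-1} − (U² − I·V)·(T·Σ_b + S)^{-1}]^{-1}. -/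
/-! Reorder the columns of each `Zᵢ` as `[1 | xᵢ]` with `xᵢ = Xᵢ ⊗ I_L`. Then `G` is a 2×2 block
matrix whose top-left block is `I • Ṽ⁻¹`, so the bottom-right block of `G⁻¹` is the inverse of the
Schur complement `∑ᵢ xᵢᵀ Ṽ⁻¹ xᵢ - I⁻¹ (∑ᵢ xᵢ)ᵀ Ṽ⁻¹ (∑ᵢ xᵢ)`. Since `J_T² = T J_T`,
`Ṽ⁻¹ = I_T ⊗ S⁻¹ + J_T ⊗ B` with `B = T⁻¹((T Σ_b + S)⁻¹ - S⁻¹)`, and then `(c ⊗ I_L)ᵀ Ṽ⁻¹ (d ⊗ I_L)`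
is `(c ⬝ d) S⁻¹ + (∑ c)(∑ d) B`; summing over the clusters (with `X_{ij}² = X_{ij}`) produces
`U`, `V`, `W`. -/

open Matrix Kronecker

def allOnes (u : ℕ) : Matrix (Fin u) (Fin u) ℝ := Matrix.of fun _ _ => 1

section Block

variable {m n 𝕜 : Type*} [Fintype m] [DecidableEq m]

theorem toBlocks₂₂_inv_fromBlocks [Fintype n] [DecidableEq n] [CommRing 𝕜] {A : Matrix m m 𝕜}
    (B : Matrix m n 𝕜) (C : Matrix n m 𝕜) (D : Matrix n n 𝕜) (hA : IsUnit A)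
    (hS : IsUnit (D - C * A⁻¹ * B)) :
    (fromBlocks A B C D)⁻¹.toBlocks₂₂ = (D - C * A⁻¹ * B)⁻¹ := by
  have := hA.invertible
  have : Invertible (D - C * ⅟A * B) := by rw [invOf_eq_nonsing_inv]; exact hS.invertible
  have := fromBlocks₁₁Invertible A B C D
  rw [← invOf_eq_nonsing_inv, invOf_fromBlocks₁₁_eq, toBlocks_fromBlocks₂₂, invOf_eq_nonsing_inv,
    invOf_eq_nonsing_inv]

theorem sum_transpose_fromCols_one_mul_mul_fromCols_one [CommRing 𝕜] {ι : Type*} [Fintype ι]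
    (M : Matrix m m 𝕜) (x : ι → Matrix m n 𝕜) :
    ∑ i, (fromCols (1 : Matrix m m 𝕜) (x i))ᵀ * M * fromCols (1 : Matrix m m 𝕜) (x i) =
      fromBlocks ((Fintype.card ι : 𝕜) • M) (M * ∑ i, x i) ((∑ i, x i)ᵀ * M)
        (∑ i, (x i)ᵀ * M * x i) := by
  simp only [transpose_fromCols, transpose_one, fromRows_mul, Matrix.one_mul, Matrix.mul_sum,
    transpose_sum, Matrix.sum_mul]
  ext (a | a) (b | b) <;> simp [Matrix.sum_apply]

theorem toBlocks₂₂_inv_sum_transpose_fromCols_one_mul_mul_fromCols_one [Fintype n]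
    [DecidableEq n] [Field 𝕜] {ι : Type*} [Fintype ι] {M : Matrix m m 𝕜} (x : ι → Matrix m n 𝕜)
    (hM : IsUnit M) (hι : (Fintype.card ι : 𝕜) ≠ 0)
    (hS : IsUnit (∑ i, (x i)ᵀ * M * x i -
      (Fintype.card ι : 𝕜)⁻¹ • ((∑ i, x i)ᵀ * M * ∑ i, x i))) :
    (∑ i, (fromCols (1 : Matrix m m 𝕜) (x i))ᵀ * M *
        fromCols (1 : Matrix m m 𝕜) (x i))⁻¹.toBlocks₂₂ =
      (∑ i, (x i)ᵀ * M * x i - (Fintype.card ι : 𝕜)⁻¹ • ((∑ i, x i)ᵀ * M * ∑ i, x i))⁻¹ := by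
  have hdet : IsUnit M.det := (isUnit_iff_isUnit_det M).mp hM
  have hinv : ((Fintype.card ι : 𝕜) • M)⁻¹ = (Fintype.card ι : 𝕜)⁻¹ • M⁻¹ :=
    inv_smul' M (Units.mk0 _ hι) hdet
  have hschur : (∑ i, x i)ᵀ * M * ((Fintype.card ι : 𝕜) • M)⁻¹ * (M * ∑ i, x i) =
      (Fintype.card ι : 𝕜)⁻¹ • ((∑ i, x i)ᵀ * M * ∑ i, x i) := by
    simp only [hinv, Matrix.mul_smul, Matrix.smul_mul, Matrix.mul_assoc,
      nonsing_inv_mul_cancel_left _ _ hdet]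
  rw [sum_transpose_fromCols_one_mul_mul_fromCols_one, toBlocks₂₂_inv_fromBlocks, hschur]
  · exact hM.smul (Units.mk0 _ hι)
  · rwa [hschur]

end Block

section Kronecker

variable {l m n p 𝕜 : Type*}

theorem kronecker_sub [CommRing 𝕜] (A : Matrix l n 𝕜) (B B' : Matrix m p 𝕜) :
    A ⊗ₖ (B - B') = A ⊗ₖ B - A ⊗ₖ B' := by
  ext
  simp [mul_sub]

theorem kronecker_sum [CommRing 𝕜] {ι : Type*} [Fintype ι] (A : Matrix l n 𝕜)
    (B : ι → Matrix m p 𝕜) :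
    ∑ i, A ⊗ₖ B i = A ⊗ₖ ∑ i, B i := by
  ext
  simp [Matrix.sum_apply, Finset.mul_sum]

theorem sum_replicateCol_kronecker [CommRing 𝕜] {ι : Type*} [Fintype ι] (X : ι → n → 𝕜)
    (P : Matrix m p 𝕜) :
    ∑ i, replicateCol l (X i) ⊗ₖ P = replicateCol l (∑ i, X i) ⊗ₖ P := by
  ext
  simp [Matrix.sum_apply, Finset.sum_mul]

theorem submatrix_sum_transpose_mul_mul [CommRing 𝕜] [Fintype m] {ι : Type*} [Fintype ι]
    (Z : ι → Matrix m n 𝕜) (M : Matrix m m 𝕜) (e : p ≃ n) :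
    (∑ i, (Z i)ᵀ * M * Z i).submatrix e e =
      ∑ i, ((Z i).submatrix id e)ᵀ * M * (Z i).submatrix id e := by
  ext
  simp [Matrix.sum_apply, Matrix.mul_apply]

theorem one_kronecker_add_kronecker_mul_eq_one [Field 𝕜] [Fintype m] [DecidableEq m] [Fintype n]
    [DecidableEq n] {J : Matrix n n 𝕜} {t : 𝕜} (hJ : J * J = t • J) (ht : t ≠ 0)
    {S R : Matrix m m 𝕜} (hS : IsUnit S) (hK : IsUnit (t • R + S)) :
    (1 ⊗ₖ S + J ⊗ₖ R) * (1 ⊗ₖ S⁻¹ + J ⊗ₖ (t⁻¹ • ((t • R + S)⁻¹ - S⁻¹))) = 1 := by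
  set B := t⁻¹ • ((t • R + S)⁻¹ - S⁻¹)
  have hSS : S * S⁻¹ = 1 := mul_nonsing_inv S ((isUnit_iff_isUnit_det S).mp hS)
  have hKK : (t • R + S) * (t • R + S)⁻¹ = 1 :=
    mul_nonsing_inv _ ((isUnit_iff_isUnit_det _).mp hK)
  have hKB : (t • R + S) * B = -(R * S⁻¹) := by
    simp only [B, Matrix.mul_smul, Matrix.mul_sub, hKK, Matrix.add_mul, Matrix.smul_mul, hSS]
    rw [smul_sub, smul_add, smul_smul, inv_mul_cancel₀ ht, one_smul]
    abel
  have hcancel : R * S⁻¹ + S * B + t • (R * B) = 0 := by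
    rw [Matrix.add_mul, Matrix.smul_mul] at hKB
    rw [show R * S⁻¹ + S * B + t • (R * B) = t • (R * B) + S * B + R * S⁻¹ by abel, hKB,
      neg_add_cancel]
  simp only [Matrix.add_mul, Matrix.mul_add, ← mul_kronecker_mul, Matrix.one_mul, Matrix.mul_one,
    hSS, hJ, smul_kronecker, ← kronecker_smul]
  rw [add_assoc, ← kronecker_add, ← kronecker_add, ← add_assoc, hcancel, kronecker_zero, add_zero,
    one_kronecker_one]

theorem transpose_replicateCol_kronecker_one_mul_kronecker_mul [CommRing 𝕜] [Fintype m]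
    [DecidableEq m] [Fintype n] [Unique l] [DecidableEq l] (c d : n → 𝕜) (A : Matrix n n 𝕜)
    (P : Matrix m m 𝕜) :
    (replicateCol l c ⊗ₖ (1 : Matrix m m 𝕜))ᵀ * (A ⊗ₖ P) *
        (replicateCol l d ⊗ₖ (1 : Matrix m m 𝕜)) =
      (1 : Matrix l l 𝕜) ⊗ₖ ((c ⬝ᵥ A *ᵥ d) • P) := by
  have hquad : (replicateCol l c)ᵀ * A * replicateCol l d = (c ⬝ᵥ A *ᵥ d) • 1 := by
    ext a b
    simp only [Subsingleton.elim a b, Matrix.mul_apply, transpose_apply, replicateCol_apply,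
      Matrix.smul_apply, one_apply_eq, smul_eq_mul, mul_one, dotProduct, mulVec, Finset.mul_sum,
      Finset.sum_mul, mul_assoc]
    exact Finset.sum_comm
  rw [← kroneckerMap_transpose, transpose_one, ← mul_kronecker_mul, ← mul_kronecker_mul, hquad,
    Matrix.one_mul, Matrix.mul_one, smul_kronecker, kronecker_smul]

end Kronecker

theorem allOnes_mul_allOnes (T : ℕ) : allOnes T * allOnes T = (T : ℝ) • allOnes T := by
  ext
  simp [allOnes, Matrix.mul_apply]

theorem dotProduct_allOnes_mulVec {T : ℕ} (c d : Fin T → ℝ) :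
    c ⬝ᵥ allOnes T *ᵥ d = (∑ j, c j) * ∑ j, d j := by
  simp only [allOnes, dotProduct, mulVec, of_apply, one_mul, Finset.sum_mul, Finset.mul_sum]
  exact Finset.sum_comm

theorem one_kronecker_add_allOnes_kronecker_mul_eq_one {T L : ℕ} (hT : T ≠ 0)
    {S Sb : Matrix (Fin L) (Fin L) ℝ} (hS : S.PosDef) (hSb : Sb.PosSemidef) :
    (1 ⊗ₖ S + allOnes T ⊗ₖ Sb) *
      (1 ⊗ₖ S⁻¹ + allOnes T ⊗ₖ ((T : ℝ)⁻¹ • (((T : ℝ) • Sb + S)⁻¹ - S⁻¹))) = 1 :=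
  one_kronecker_add_kronecker_mul_eq_one (allOnes_mul_allOnes T) (Nat.cast_ne_zero.mpr hT)
    hS.isUnit (PosDef.posSemidef_add (hSb.smul (Nat.cast_nonneg T)) hS).isUnit

theorem schur_complement_treatment_columns {I T : ℕ} {m : Type*} [Fintype m] [DecidableEq m]
    (X : Fin I → Fin T → ℝ) (hX : ∀ i j, X i j = 0 ∨ X i j = 1) (P Q : Matrix m m ℝ) :
    ∑ i, (replicateCol (Fin 1) (X i) ⊗ₖ (1 : Matrix m m ℝ))ᵀ * (1 ⊗ₖ P + allOnes T ⊗ₖ Q) *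
        (replicateCol (Fin 1) (X i) ⊗ₖ (1 : Matrix m m ℝ)) -
      (I : ℝ)⁻¹ •
        ((∑ i, replicateCol (Fin 1) (X i) ⊗ₖ (1 : Matrix m m ℝ))ᵀ * (1 ⊗ₖ P + allOnes T ⊗ₖ Q) *
          ∑ i, replicateCol (Fin 1) (X i) ⊗ₖ (1 : Matrix m m ℝ)) =
      (1 : Matrix (Fin 1) (Fin 1) ℝ) ⊗ₖ
        ((∑ i, ∑ j, X i j) • P + (∑ i, (∑ j, X i j) ^ 2) • Q -
          (I : ℝ)⁻¹ • ((∑ j, (∑ i, X i j) ^ 2) • P + (∑ i, ∑ j, X i j) ^ 2 • Q)) := by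
  have hXX : ∑ i, X i ⬝ᵥ X i = ∑ i, ∑ j, X i j := by
    refine Finset.sum_congr rfl fun i _ => Finset.sum_congr rfl fun j _ => ?_
    rcases hX i j with h | h <;> simp [h]
  have hXsum : ∑ j, (∑ i, X i) j = ∑ i, ∑ j, X i j := by
    rw [Finset.sum_comm]
    simp [Finset.sum_apply]
  have hXsumXsum : (∑ i, X i) ⬝ᵥ (∑ i, X i) = ∑ j, (∑ i, X i j) ^ 2 := by
    simp [dotProduct, Finset.sum_apply, sq]
  simp only [sum_replicateCol_kronecker, Matrix.mul_add, Matrix.add_mul,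
    transpose_replicateCol_kronecker_one_mul_kronecker_mul, Finset.sum_add_distrib, kronecker_sum,
    ← kronecker_add, ← kronecker_smul, ← kronecker_sub, one_mulVec, dotProduct_allOnes_mulVec,
    ← Finset.sum_smul, hXX, hXsum, hXsumXsum, ← sq]

def finSuccProdEquiv (T : ℕ) (m : Type*) : (Fin T × m) ⊕ (Fin 1 × m) ≃ Fin (T + 1) × m :=
  (Equiv.sumProdDistrib _ _ _).symm.trans (finSumFinEquiv.prodCongr (Equiv.refl m))

theorem submatrix_finSuccProdEquiv {T : ℕ} {m 𝕜 : Type*} [DecidableEq m] [CommRing 𝕜]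
    (x : Fin T → 𝕜) :
    ((of fun (j : Fin T) (p : Fin (T + 1)) =>
        if (p : ℕ) = T then x j else if (j : ℕ) = (p : ℕ) then (1 : 𝕜) else 0) ⊗ₖ
        (1 : Matrix m m 𝕜)).submatrix id (finSuccProdEquiv T m) =
      fromCols 1 (replicateCol (Fin 1) x ⊗ₖ 1) := by
  ext ⟨j, l⟩ (⟨j', l'⟩ | ⟨k, l'⟩)
  · simp [finSuccProdEquiv, Matrix.one_apply, Fin.val_eq_val, j'.isLt.ne]
    split_ifs <;> simp_all
  · simp [finSuccProdEquiv, Fin.natAdd, Subsingleton.elim k 0]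

theorem finSuccProdEquiv_inr_zero (T : ℕ) {m : Type*} (l : m) :
    finSuccProdEquiv T m (Sum.inr (0, l)) = (Fin.last T, l) := by
  simp [finSuccProdEquiv, Fin.ext_iff]

theorem fgls_bottom_right_block_general
    (I T L N : ℕ) (hI : 1 ≤ I) (hT : 1 ≤ T)
    (X : Fin I → Fin T → ℝ) (hX : ∀ i j, X i j = 0 ∨ X i j = 1)
    (Sb Ss Se : Matrix (Fin L) (Fin L) ℝ)
    (hSb : Sb.PosDef) (hSs : Ss.PosDef) (hSe : Se.PosDef)
    (U V W : ℝ)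
    (hU : U = ∑ i : Fin I, ∑ j : Fin T, X i j)
    (hV : V = ∑ i : Fin I, (∑ j : Fin T, X i j) ^ 2)
    (hW : W = ∑ j : Fin T, (∑ i : Fin I, X i j) ^ 2)
    (S : Matrix (Fin L) (Fin L) ℝ) (hS : S = Ss + ((N : ℝ))⁻¹ • Se)
    (Vt : Matrix (Fin T × Fin L) (Fin T × Fin L) ℝ)
    (hVt : Vt = (1 : Matrix (Fin T) (Fin T) ℝ) ⊗ₖ S + allOnes T ⊗ₖ Sb)
    (Z : Fin I → Matrix (Fin T × Fin L) (Fin (T + 1) × Fin L) ℝ)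
    (hZ : Z = fun i =>
      (Matrix.of fun (j : Fin T) (p : Fin (T + 1)) =>
        if (p : ℕ) = T then X i j else if (j : ℕ) = (p : ℕ) then (1 : ℝ) else 0) ⊗ₖ
        (1 : Matrix (Fin L) (Fin L) ℝ))
    (G : Matrix (Fin (T + 1) × Fin L) (Fin (T + 1) × Fin L) ℝ)
    (hG : G = ∑ i : Fin I, (Z i)ᵀ * Vt⁻¹ * Z i)
    (E : Matrix (Fin L) (Fin L) ℝ)
    (hE : E = ((I : ℝ) * T * U - T * W + U ^ 2 - I * V) • S⁻¹ -
      (U ^ 2 - (I : ℝ) * V) • ((T : ℝ) • Sb + S)⁻¹)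
    (hEunit : IsUnit E) :
    (Matrix.of fun l l' : Fin L => G⁻¹ (Fin.last T, l) (Fin.last T, l')) =
      ((I : ℝ) * T) • E⁻¹ := by
  have hIT : ((I : ℝ) * T)⁻¹ ≠ 0 := by simp; omega
  have hSpd : S.PosDef := hS ▸ hSs.add_posSemidef (hSe.posSemidef.smul (by positivity))
  set B := (T : ℝ)⁻¹ • (((T : ℝ) • Sb + S)⁻¹ - S⁻¹)
  have hVtB : Vt * (1 ⊗ₖ S⁻¹ + allOnes T ⊗ₖ B) = 1 :=
    hVt ▸ one_kronecker_add_allOnes_kronecker_mul_eq_one (by omega) hSpd hSb.posSemidef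
  set x : Fin I → Matrix (Fin T × Fin L) (Fin 1 × Fin L) ℝ :=
    fun i => replicateCol (Fin 1) (X i) ⊗ₖ 1
  have hGe : G.submatrix (finSuccProdEquiv T (Fin L)) (finSuccProdEquiv T (Fin L)) =
      ∑ i, (fromCols 1 (x i))ᵀ * Vt⁻¹ * fromCols 1 (x i) := by
    simp only [hG, submatrix_sum_transpose_mul_mul, hZ, submatrix_finSuccProdEquiv, x]
  have hschur_coeff : U • S⁻¹ + V • B - (I : ℝ)⁻¹ • (W • S⁻¹ + U ^ 2 • B) =
      ((I : ℝ) * T)⁻¹ • E := by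
    rw [hE]
    match_scalars <;> field_simp <;> ring
  have hschur : ∑ i, (x i)ᵀ * Vt⁻¹ * x i -
      (Fintype.card (Fin I) : ℝ)⁻¹ • ((∑ i, x i)ᵀ * Vt⁻¹ * ∑ i, x i) =
      (1 : Matrix (Fin 1) (Fin 1) ℝ) ⊗ₖ (((I : ℝ) * T)⁻¹ • E) := by
    rw [Fintype.card_fin, inv_eq_right_inv hVtB, ← hschur_coeff, hU, hV, hW]
    exact schur_complement_treatment_columns X hX _ _
  have hblock := toBlocks₂₂_inv_sum_transpose_fromCols_one_mul_mul_fromCols_one x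
    (isUnit_nonsing_inv_iff.mpr ((isUnit_iff_isUnit_det _).mpr (isUnit_det_of_right_inverse hVtB)))
    (by simp; omega) (hschur ▸ isUnit_one.kronecker (hEunit.smul (Units.mk0 _ hIT)))
  have hinvE : (((I : ℝ) * T)⁻¹ • E)⁻¹ = ((I : ℝ) * T)⁻¹⁻¹ • E⁻¹ :=
    inv_smul' E (Units.mk0 _ hIT) ((isUnit_iff_isUnit_det E).mp hEunit)
  rw [← hGe, hschur, inv_kronecker, inv_one, hinvE, inv_inv, inv_submatrix_equiv] at hblock
  ext l l'
  simpa [toBlocks₂₂, finSuccProdEquiv_inr_zero] using congrFun (congrFun hblock (0, l)) (0, l')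

/-- The bottom-right L×L block of `(∑ᵢ Zᵢᵀ Ṽ⁻¹ Zᵢ)⁻¹` equals
`I·T·[(ITU − TW + U² − IV)·S⁻¹ − (U² − IV)·(T·Σ_b + S)⁻¹]⁻¹` for a cross-sectional
stepped wedge design with treatment schedule `X`. -/
theorem fgls_bottom_right_block
    (I T L N : ℕ) (hI : 1 ≤ I) (hT : 1 ≤ T) (hL : 1 ≤ L) (hN : 1 ≤ N)
    (X : Fin I → Fin T → ℝ) (hX : ∀ i j, X i j = 0 ∨ X i j = 1)
    (Sb Ss Se : Matrix (Fin L) (Fin L) ℝ)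
    (hSb : Sb.PosDef) (hSs : Ss.PosDef) (hSe : Se.PosDef)
    (U V W : ℝ)
    (hU : U = ∑ i : Fin I, ∑ j : Fin T, X i j)
    (hV : V = ∑ i : Fin I, (∑ j : Fin T, X i j) ^ 2)
    (hW : W = ∑ j : Fin T, (∑ i : Fin I, X i j) ^ 2)
    (S : Matrix (Fin L) (Fin L) ℝ) (hS : S = Ss + ((N : ℝ))⁻¹ • Se)
    (Vt : Matrix (Fin T × Fin L) (Fin T × Fin L) ℝ)
    (hVt : Vt = (1 : Matrix (Fin T) (Fin T) ℝ) ⊗ₖ S + allOnes T ⊗ₖ Sb)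
    (Z : Fin I → Matrix (Fin T × Fin L) (Fin (T + 1) × Fin L) ℝ)
    (hZ : Z = fun i =>
      (Matrix.of fun (j : Fin T) (p : Fin (T + 1)) =>
        if (p : ℕ) = T then X i j else if (j : ℕ) = (p : ℕ) then (1 : ℝ) else 0) ⊗ₖ
        (1 : Matrix (Fin L) (Fin L) ℝ))
    (G : Matrix (Fin (T + 1) × Fin L) (Fin (T + 1) × Fin L) ℝ)
    (hG : G = ∑ i : Fin I, (Z i)ᵀ * Vt⁻¹ * Z i)
    (E : Matrix (Fin L) (Fin L) ℝ)
    (hE : E = ((I : ℝ) * T * U - T * W + U ^ 2 - I * V) • S⁻¹ -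
      (U ^ 2 - (I : ℝ) * V) • ((T : ℝ) • Sb + S)⁻¹)
    (hGunit : IsUnit G) (hEunit : IsUnit E) :
    (Matrix.of fun l l' : Fin L => G⁻¹ (Fin.last T, l) (Fin.last T, l')) =
      ((I : ℝ) * T) • E⁻¹ :=
  fgls_bottom_right_block_general I T L N hI hT X hX Sb Ss Se hSb hSs hSe U V W hU hV hW S hS Vt hVt
    Z hZ G hG E hE hEunit
end

section
/- Let I, T ≥ 1 and L ≥ 1 be positive integers, let C1 and C2 be real numbers, let Γ0, Γ1, Γ2 be L×L real symmetric matrices, and let Λhalf = diag(σ_{y1},…,σ_{yL}) with each σ_{yl} > 0. For real N > 0 define Ω(N) = (I·T/N)·Λhalf·[C1·(Γ2 − N·Γ1 + (N−1)·Γ0)^{-1} − C2·(Γ2 + (T−1)·N·Γ1 + (N−1)·Γ0)^{-1}]^{-1}·Λhalf, where the inverse is the total (nonsingular) matrix inverse. Assume Γ0 − Γ1, Γ0 + (T−1)·Γ1, and C1·(Γ0 − Γ1)^{-1} − C2·(Γ0 + (T−1)·Γ1)^{-1} are invertible. Then, as N → ∞, Ω(N) converges (entrywise) to the matrix I·T·Λhalf·[C1·(Γ0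 − Γ1)^{-1} − C2·(Γ0 + (T−1)·Γ1)^{-1}]^{-1}·Λhalf. -/
/-!
Writing `Γ(N) = N • S + E` with `S` equal to `Γ0 - Γ1`, resp. `Γ0 + (T - 1) • Γ1`, and
`E = Γ2 - Γ0`, the factor `N` pulls out of every inverse, so that `N⁻¹ • [C1 • Γ(N)⁻¹ - …]⁻¹`
equals `g (N⁻¹)` for `g t = [C1 • (S + t • E)⁻¹ - …]⁻¹`. The invertibility hypotheses make `g`
continuous at `0`, and `N⁻¹ → 0`.
-/

open Matrix Filter Topology

namespace Matrix

variable {n : Type*} [Fintype n] [DecidableEq n]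

theorem inv_smul_of_ne_zero {K : Type*} [Field K] {k : K} (hk : k ≠ 0) (A : Matrix n n K) :
    (k • A)⁻¹ = k⁻¹ • A⁻¹ := by
  by_cases hA : IsUnit A.det
  · exact inv_smul' A (Units.mk0 k hk) hA
  · have hkA : ¬IsUnit (k • A).det := by
      rw [det_smul]
      exact fun h ↦ hA (isUnit_of_mul_isUnit_right h)
    rw [nonsing_inv_apply_not_isUnit _ hA, nonsing_inv_apply_not_isUnit _ hkA, smul_zero]

theorem _root_.ContinuousAt.matrix_inv {X 𝕜 : Type*} [TopologicalSpace X] [NormedField 𝕜]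
    {A : X → Matrix n n 𝕜} {x : X} (hA : ContinuousAt A x) (hx : IsUnit (A x)) :
    ContinuousAt (fun y ↦ (A y)⁻¹) x := by
  have hdet : (A x).det ≠ 0 := ((isUnit_iff_isUnit_det _).mp hx).ne_zero
  refine (continuousAt_matrix_inv _ ?_).comp hA
  rw [Ring.inverse_eq_inv']
  exact continuousAt_inv₀ hdet

theorem tendsto_inv_smul_inv_sub_inv_smul_add (c₁ c₂ : ℝ) {A B : Matrix n n ℝ}
    (E F : Matrix n n ℝ) (hA : IsUnit A) (hB : IsUnit B)
    (hAB : IsUnit (c₁ • A⁻¹ - c₂ • B⁻¹)) :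
    Tendsto (fun N : ℝ ↦ N⁻¹ • (c₁ • (N • A + E)⁻¹ - c₂ • (N • B + F)⁻¹)⁻¹) atTop
      (𝓝 (c₁ • A⁻¹ - c₂ • B⁻¹)⁻¹) := by
  set g : ℝ → Matrix n n ℝ := fun t ↦ (c₁ • (A + t • E)⁻¹ - c₂ • (B + t • F)⁻¹)⁻¹
  have hg : ContinuousAt g 0 := by
    have hE : ContinuousAt (fun t : ℝ ↦ A + t • E) 0 := by fun_prop
    have hF : ContinuousAt (fun t : ℝ ↦ B + t • F) 0 := by fun_prop
    refine ContinuousAt.matrix_inv ?_ (by simpa using hAB)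
    exact ((hE.matrix_inv (by simpa using hA)).const_smul c₁).sub
      ((hF.matrix_inv (by simpa using hB)).const_smul c₂)
  have hg0 : g 0 = (c₁ • A⁻¹ - c₂ • B⁻¹)⁻¹ := by simp [g]
  have hrescale : ∀ᶠ N : ℝ in atTop,
      g N⁻¹ = N⁻¹ • (c₁ • (N • A + E)⁻¹ - c₂ • (N • B + F)⁻¹)⁻¹ := by
    filter_upwards [eventually_ne_atTop 0] with N hN
    have hpull : ∀ M D : Matrix n n ℝ, (N • M + D)⁻¹ = N⁻¹ • (M + N⁻¹ • D)⁻¹ := fun M D ↦ by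
      rw [← inv_smul_of_ne_zero hN, smul_add, smul_inv_smul₀ hN]
    rw [hpull, hpull, smul_comm c₁, smul_comm c₂, ← smul_sub,
      inv_smul_of_ne_zero (inv_ne_zero hN), inv_inv, inv_smul_smul₀ hN]
  rw [← hg0]
  exact (hg.tendsto.comp tendsto_inv_atTop_zero).congr' hrescale

end Matrix

theorem limit_covariance_as_N_to_infty_general
    (I T L : ℕ)
    (C1 C2 : ℝ)
    (G0 G1 G2 : Matrix (Fin L) (Fin L) ℝ)
    (σ : Fin L → ℝ)
    (h01 : IsUnit (G0 - G1))
    (h0T1 : IsUnit (G0 + ((T : ℝ) - 1) • G1))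
    (hlim : IsUnit (C1 • (G0 - G1)⁻¹ - C2 • (G0 + ((T : ℝ) - 1) • G1)⁻¹)) :
    ∀ l l' : Fin L,
      Tendsto
        (fun N : ℝ =>
          ((((I : ℝ) * T) / N) •
            (Matrix.diagonal σ *
              (C1 • (G2 - N • G1 + (N - 1) • G0)⁻¹ -
                C2 • (G2 + (((T : ℝ) - 1) * N) • G1 + (N - 1) • G0)⁻¹)⁻¹ *
              Matrix.diagonal σ)) l l')
        atTop
        (nhds
          ((((I : ℝ) * T) •
            (Matrix.diagonal σ *
              (C1 • (G0 - G1)⁻¹ - C2 • (G0 + ((T : ℝ) - 1) • G1)⁻¹)⁻¹ *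
              Matrix.diagonal σ)) l l')) := by
  intro l l'
  have hM := tendsto_inv_smul_inv_sub_inv_smul_add C1 C2 (G2 - G0) (G2 - G0) h01 h0T1 hlim
  have hentry : Continuous fun X : Matrix (Fin L) (Fin L) ℝ ↦
      (((I : ℝ) * T) • (diagonal σ * X * diagonal σ)) l l' := by fun_prop
  refine ((hentry.tendsto _).comp hM).congr fun N ↦ ?_
  have hΓ₁ : G2 - N • G1 + (N - 1) • G0 = N • (G0 - G1) + (G2 - G0) := by module
  have hΓ₂ : G2 + (((T : ℝ) - 1) * N) • G1 + (N - 1) • G0 =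
      N • (G0 + ((T : ℝ) - 1) • G1) + (G2 - G0) := by module
  simp only [Function.comp_apply, hΓ₁, hΓ₂, Matrix.mul_smul, Matrix.smul_mul, smul_smul,
    div_eq_mul_inv]

/-- As the cluster-period size N → ∞, the covariance matrix Ω(N) of the
treatment effect estimators converges entrywise to
`I·T·Λhalf·[C1·(Γ0 − Γ1)⁻¹ − C2·(Γ0 + (T−1)·Γ1)⁻¹]⁻¹·Λhalf`. -/
theorem limit_covariance_as_N_to_infty
    (I T L : ℕ) (hI : 1 ≤ I) (hT : 1 ≤ T) (hL : 1 ≤ L)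
    (C1 C2 : ℝ)
    (G0 G1 G2 : Matrix (Fin L) (Fin L) ℝ)
    (hG0 : G0.IsSymm) (hG1 : G1.IsSymm) (hG2 : G2.IsSymm)
    (σ : Fin L → ℝ) (hσ : ∀ l, 0 < σ l)
    (h01 : IsUnit (G0 - G1))
    (h0T1 : IsUnit (G0 + ((T : ℝ) - 1) • G1))
    (hlim : IsUnit (C1 • (G0 - G1)⁻¹ - C2 • (G0 + ((T : ℝ) - 1) • G1)⁻¹)) :
    ∀ l l' : Fin L,
      Tendsto
        (fun N : ℝ =>
          ((((I : ℝ) * T) / N) •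
            (Matrix.diagonal σ *
              (C1 • (G2 - N • G1 + (N - 1) • G0)⁻¹ -
                C2 • (G2 + (((T : ℝ) - 1) * N) • G1 + (N - 1) • G0)⁻¹)⁻¹ *
              Matrix.diagonal σ)) l l')
        atTop
        (nhds
          ((((I : ℝ) * T) •
            (Matrix.diagonal σ *
              (C1 • (G0 - G1)⁻¹ - C2 • (G0 + ((T : ℝ) - 1) • G1)⁻¹)⁻¹ *
              Matrix.diagonal σ)) l l')) :=
  limit_covariance_as_N_to_infty_general I T L C1 C2 G0 G1 G2 σ h01 h0T1 hlim
end

section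
/- Let L ≥ 1 be a positive integer, let I, T, N, σ² be positive reals, and let λ2, λ3, τ2, τ3, C1, C2 be reals satisfying λ2 > 0, λ3 > 0, λ2 − τ2 > 0, λ3 − τ3 > 0, λ2 + (L−1)τ2 > 0, λ3 + (L−1)τ3 > 0, C1 > 0, and C2 ≤ 0. Define var = ((I·T/N)·σ² / [C1(λ3 − τ3) − C2(λ2 − τ2)]) · ([C1·λ2·(λ3 − τ3)·(λ3 + (L−1)τ3) − C2·λ3·(λ2 − τ2)·(λ2 + (L−1)τ2)] / [C1(λ3 + (L−1)τ3) − C2(λ2 + (L−1)τ2)]) and var_HG = (I·T/N)·σ²·λ2·λ3 / (C1·λ3 − C2·λ2). Then var ≤ var_HG, and if τ2·λ3 = τ3·λ2 then var = var_HG. -/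
/-- Theorem 1: under common ICC values across endpoints, the variance of the
l-th treatment effect estimator from the multivariate LMM is no larger than the
Hooper–Girling variance from a separate univariate LMM, with equality when
`τ2·λ3 = τ3·λ2`. -/
theorem mlmm_variance_le_hooper_girling
    (L : ℕ) (hL : 1 ≤ L) (I T N σ2 : ℝ)
    (hI : 0 < I) (hT : 0 < T) (hN : 0 < N) (hσ2 : 0 < σ2)
    (lam2 lam3 tau2 tau3 C1 C2 : ℝ)
    (hlam2 : 0 < lam2) (hlam3 : 0 < lam3)
    (h1 : 0 < lam2 - tau2) (h2 : 0 < lam3 - tau3)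
    (h3 : 0 < lam2 + ((L : ℝ) - 1) * tau2) (h4 : 0 < lam3 + ((L : ℝ) - 1) * tau3)
    (hC1 : 0 < C1) (hC2 : C2 ≤ 0) :
    (I * T / N * σ2 / (C1 * (lam3 - tau3) - C2 * (lam2 - tau2))) *
      ((C1 * lam2 * (lam3 - tau3) * (lam3 + ((L : ℝ) - 1) * tau3) -
        C2 * lam3 * (lam2 - tau2) * (lam2 + ((L : ℝ) - 1) * tau2)) /
       (C1 * (lam3 + ((L : ℝ) - 1) * tau3) - C2 * (lam2 + ((L : ℝ) - 1) * tau2))) ≤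
      I * T / N * σ2 * lam2 * lam3 / (C1 * lam3 - C2 * lam2) ∧
    (tau2 * lam3 = tau3 * lam2 →
      (I * T / N * σ2 / (C1 * (lam3 - tau3) - C2 * (lam2 - tau2))) *
        ((C1 * lam2 * (lam3 - tau3) * (lam3 + ((L : ℝ) - 1) * tau3) -
          C2 * lam3 * (lam2 - tau2) * (lam2 + ((L : ℝ) - 1) * tau2)) /
         (C1 * (lam3 + ((L : ℝ) - 1) * tau3) - C2 * (lam2 + ((L : ℝ) - 1) * tau2))) =
        I * T / N * σ2 * lam2 * lam3 / (C1 * lam3 - C2 * lam2)) := by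
  have hL1 : (1 : ℝ) ≤ (L : ℝ) := by exact_mod_cast hL
  have hK : 0 < I * T / N * σ2 := by positivity
  have hD1 : 0 < C1 * (lam3 - tau3) - C2 * (lam2 - tau2) := by nlinarith
  have hD2 : 0 < C1 * (lam3 + ((L : ℝ) - 1) * tau3) - C2 * (lam2 + ((L : ℝ) - 1) * tau2) := by
    nlinarith
  have hD3 : 0 < C1 * lam3 - C2 * lam2 := by nlinarith
  have key : lam2 * lam3 *
      ((C1 * (lam3 - tau3) - C2 * (lam2 - tau2)) *
        (C1 * (lam3 + ((L : ℝ) - 1) * tau3) - C2 * (lam2 + ((L : ℝ) - 1) * tau2))) -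
      (C1 * lam2 * (lam3 - tau3) * (lam3 + ((L : ℝ) - 1) * tau3) -
        C2 * lam3 * (lam2 - tau2) * (lam2 + ((L : ℝ) - 1) * tau2)) *
        (C1 * lam3 - C2 * lam2) =
      C1 * (-C2) * ((L : ℝ) - 1) * (tau2 * lam3 - tau3 * lam2) ^ 2 := by ring
  have hnn : 0 ≤ C1 * (-C2) * ((L : ℝ) - 1) * (tau2 * lam3 - tau3 * lam2) ^ 2 := by
    have : 0 ≤ -C2 := by linarith
    have : 0 ≤ C1 * (-C2) * ((L : ℝ) - 1) :=
      mul_nonneg (mul_nonneg hC1.le this) (by linarith)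
    exact mul_nonneg this (sq_nonneg _)
  have hle : (C1 * lam2 * (lam3 - tau3) * (lam3 + ((L : ℝ) - 1) * tau3) -
        C2 * lam3 * (lam2 - tau2) * (lam2 + ((L : ℝ) - 1) * tau2)) *
        (C1 * lam3 - C2 * lam2) ≤
      lam2 * lam3 *
      ((C1 * (lam3 - tau3) - C2 * (lam2 - tau2)) *
        (C1 * (lam3 + ((L : ℝ) - 1) * tau3) - C2 * (lam2 + ((L : ℝ) - 1) * tau2))) := by
    linarith [key, hnn]
  constructor
  · rw [div_mul_div_comm, div_le_div_iff₀ (by positivity) hD3]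
    calc I * T / N * σ2 *
          (C1 * lam2 * (lam3 - tau3) * (lam3 + ((L : ℝ) - 1) * tau3) -
            C2 * lam3 * (lam2 - tau2) * (lam2 + ((L : ℝ) - 1) * tau2)) *
          (C1 * lam3 - C2 * lam2)
        = (I * T / N * σ2) *
          ((C1 * lam2 * (lam3 - tau3) * (lam3 + ((L : ℝ) - 1) * tau3) -
            C2 * lam3 * (lam2 - tau2) * (lam2 + ((L : ℝ) - 1) * tau2)) *
          (C1 * lam3 - C2 * lam2)) := by ring
      _ ≤ (I * T / N * σ2) *
          (lam2 * lam3 *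
          ((C1 * (lam3 - tau3) - C2 * (lam2 - tau2)) *
            (C1 * (lam3 + ((L : ℝ) - 1) * tau3) - C2 * (lam2 + ((L : ℝ) - 1) * tau2)))) :=
          mul_le_mul_of_nonneg_left hle hK.le
      _ = I * T / N * σ2 * lam2 * lam3 *
          ((C1 * (lam3 - tau3) - C2 * (lam2 - tau2)) *
            (C1 * (lam3 + ((L : ℝ) - 1) * tau3) - C2 * (lam2 + ((L : ℝ) - 1) * tau2))) := by
          ring
  · intro h
    rw [div_mul_div_comm, div_eq_div_iff (by positivity) (ne_of_gt hD3)]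
    have hz : (tau2 * lam3 - tau3 * lam2) = 0 := by linarith
    have heq : (C1 * lam2 * (lam3 - tau3) * (lam3 + ((L : ℝ) - 1) * tau3) -
          C2 * lam3 * (lam2 - tau2) * (lam2 + ((L : ℝ) - 1) * tau2)) *
          (C1 * lam3 - C2 * lam2) =
        lam2 * lam3 *
        ((C1 * (lam3 - tau3) - C2 * (lam2 - tau2)) *
          (C1 * (lam3 + ((L : ℝ) - 1) * tau3) - C2 * (lam2 + ((L : ℝ) - 1) * tau2))) := by
      linear_combination -key + C1 * C2 * ((L : ℝ) - 1) * (tau2 * lam3 - tau3 * lam2) * hz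
    linear_combination (I * T / N * σ2) * heq
end

section
/- Let L ≥ 2 be an integer, let I, T, N, σ² be positive reals, and let λ2, λ3, τ2, τ3, C1, C2 be reals satisfying λ2 > 0, λ3 > 0, λ2 − τ2 > 0, λ3 − τ3 > 0, λ2 + (L−1)τ2 > 0, λ3 + (L−1)τ3 > 0, C1 > 0, and C2 ≤ 0. Define var_both = (I·T/(L·N))·σ²·(λ2 + (L−1)τ2)·(λ3 + (L−1)τ3) / [C1(λ3 + (L−1)τ3) − C2(λ2 + (L−1)τ2)] and var_ICC = ((I·T/N)·σ² / [C1(λ3 − τ3) − C2(λ2 − τ2)]) · ([C1·λ2·(λ3 − τ3)·(λ3 + (L−1)τ3) − C2·λ3·(λ2 − τ2)·(λ2 + (L−1)τ2)] / [C1(λ3 + (L−1)τ3) − C2(λ2 + (L−1)τ2)]). Then var_both < var_ICC. -/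
/-- Theorem 2: under common ICC values across endpoints, additionally
assuming a common standardized treatment effect strictly decreases the variance of the
(unscaled) l-th treatment effect estimator. -/
theorem common_effect_variance_lt_common_icc_variance
    (L : ℕ) (hL : 2 ≤ L) (I T N σ2 : ℝ)
    (hI : 0 < I) (hT : 0 < T) (hN : 0 < N) (hσ2 : 0 < σ2)
    (lam2 lam3 tau2 tau3 C1 C2 : ℝ)
    (hlam2 : 0 < lam2) (hlam3 : 0 < lam3)
    (h1 : 0 < lam2 - tau2) (h2 : 0 < lam3 - tau3)
    (h3 : 0 < lam2 + ((L : ℝ) - 1) * tau2) (h4 : 0 < lam3 + ((L : ℝ) - 1) * tau3)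
    (hC1 : 0 < C1) (hC2 : C2 ≤ 0) :
    I * T / ((L : ℝ) * N) * σ2 * (lam2 + ((L : ℝ) - 1) * tau2) * (lam3 + ((L : ℝ) - 1) * tau3) /
        (C1 * (lam3 + ((L : ℝ) - 1) * tau3) - C2 * (lam2 + ((L : ℝ) - 1) * tau2)) <
      (I * T / N * σ2 / (C1 * (lam3 - tau3) - C2 * (lam2 - tau2))) *
        ((C1 * lam2 * (lam3 - tau3) * (lam3 + ((L : ℝ) - 1) * tau3) -
          C2 * lam3 * (lam2 - tau2) * (lam2 + ((L : ℝ) - 1) * tau2)) /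
         (C1 * (lam3 + ((L : ℝ) - 1) * tau3) - C2 * (lam2 + ((L : ℝ) - 1) * tau2))) := by
  have hL2 : (2 : ℝ) ≤ (L : ℝ) := by exact_mod_cast hL
  have hLpos : (0 : ℝ) < (L : ℝ) := by linarith
  set A := lam2 + ((L : ℝ) - 1) * tau2 with hA
  set B := lam3 + ((L : ℝ) - 1) * tau3 with hB
  have hD : 0 < C1 * B - C2 * A := by
    nlinarith [mul_pos hC1 h4, mul_nonneg (neg_nonneg.2 hC2) h3.le]
  have hE : 0 < C1 * (lam3 - tau3) - C2 * (lam2 - tau2) := by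
    nlinarith [mul_pos hC1 h2, mul_nonneg (neg_nonneg.2 hC2) h1.le]
  set E := C1 * (lam3 - tau3) - C2 * (lam2 - tau2) with hEdef
  set D := C1 * B - C2 * A with hDdef
  set num := C1 * lam2 * (lam3 - tau3) * B - C2 * lam3 * (lam2 - tau2) * A with hnum
  have key : I * T * σ2 * num * ((L : ℝ) * N * D) -
      I * T * σ2 * (A * B) * (N * E * D) =
      I * T * σ2 * N * (((L : ℝ) - 1) * ((lam2 - tau2) * ((lam3 - tau3) * (D * D)))) := by
    simp only [hA, hB, hEdef, hDdef, hnum]; ring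
  have hpos : 0 < I * T * σ2 * N * (((L : ℝ) - 1) * ((lam2 - tau2) * ((lam3 - tau3) * (D * D)))) := by
    have : (0:ℝ) < (L : ℝ) - 1 := by linarith
    positivity
  calc I * T / ((L : ℝ) * N) * σ2 * A * B / D
      = I * T * σ2 * (A * B) / ((L : ℝ) * N * D) := by
        field_simp
    _ < I * T * σ2 * num / (N * E * D) := by
        rw [div_lt_div_iff₀ (by positivity) (by positivity)]
        linarith [key, hpos]
    _ = (I * T / N * σ2 / E) * (num / D) := by
        field_simp
end

section
/- Let L ≥ 1 be a positive integer, let I, T, N, σ² be positive reals, and let λ3, λ4, τ3, τ4, C1, C2 be reals satisfying λ3 > 0, λ4 > 0, λ3 − τ3 > 0, λ4 − τ4 > 0, λ3 + (L−1)τ3 > 0, λ4 + (L−1)τ4 > 0, C1 > 0, and C2 ≤ 0. Define var = ((I·T/N)·σ² / [C1(λ4 − τ4) − C2(λ3 − τ3)]) · ([C1·λ3·(λ4 − τ4)·(λ4 + (L−1)τ4) − C2·λ4·(λ3 − τ3)·(λ3 + (L−1)τ3)] / [C1(λ4 + (L−1)τ4) − C2(λ3 + (L−1)τ3)]) and var_HG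 = (I·T/N)·σ²·λ3·λ4 / (C1·λ4 − C2·λ3). Then var ≤ var_HG, and if τ3·λ4 = τ4·λ3 then var = var_HG. -/
/-- Theorem 3, closed-cohort design: under common ICC values across endpoints, the variance of the
l-th treatment effect estimator from the multivariate LMM is no larger than the
Hooper–Girling variance from a separate univariate LMM, with equality when
`τ3·λ4 = τ4·λ3`. -/
theorem mlmm_variance_le_hooper_girling_closed_cohort
    (L : ℕ) (hL : 1 ≤ L) (I T N σ2 : ℝ)
    (hI : 0 < I) (hT : 0 < T) (hN : 0 < N) (hσ2 : 0 < σ2)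
    (lam3 lam4 tau3 tau4 C1 C2 : ℝ)
    (hlam3 : 0 < lam3) (hlam4 : 0 < lam4)
    (h1 : 0 < lam3 - tau3) (h2 : 0 < lam4 - tau4)
    (h3 : 0 < lam3 + ((L : ℝ) - 1) * tau3) (h4 : 0 < lam4 + ((L : ℝ) - 1) * tau4)
    (hC1 : 0 < C1) (hC2 : C2 ≤ 0) :
    (I * T / N * σ2 / (C1 * (lam4 - tau4) - C2 * (lam3 - tau3))) *
      ((C1 * lam3 * (lam4 - tau4) * (lam4 + ((L : ℝ) - 1) * tau4) -
        C2 * lam4 * (lam3 - tau3) * (lam3 + ((L : ℝ) - 1) * tau3)) /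
       (C1 * (lam4 + ((L : ℝ) - 1) * tau4) - C2 * (lam3 + ((L : ℝ) - 1) * tau3))) ≤
      I * T / N * σ2 * lam3 * lam4 / (C1 * lam4 - C2 * lam3) ∧
    (tau3 * lam4 = tau4 * lam3 →
      (I * T / N * σ2 / (C1 * (lam4 - tau4) - C2 * (lam3 - tau3))) *
        ((C1 * lam3 * (lam4 - tau4) * (lam4 + ((L : ℝ) - 1) * tau4) -
          C2 * lam4 * (lam3 - tau3) * (lam3 + ((L : ℝ) - 1) * tau3)) /
         (C1 * (lam4 + ((L : ℝ) - 1) * tau4) - C2 * (lam3 + ((L : ℝ) - 1) * tau3))) =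
        I * T / N * σ2 * lam3 * lam4 / (C1 * lam4 - C2 * lam3)) := by
  have hm : 0 ≤ (L : ℝ) - 1 := by
    have : (1:ℝ) ≤ (L:ℝ) := by exact_mod_cast hL
    linarith
  set m : ℝ := (L : ℝ) - 1 with hmdef
  set K : ℝ := I * T / N * σ2 with hK
  have hKpos : 0 < K := by positivity
  set D1 : ℝ := C1 * (lam4 - tau4) - C2 * (lam3 - tau3) with hD1
  set D2 : ℝ := C1 * (lam4 + m * tau4) - C2 * (lam3 + m * tau3) with hD2
  set D : ℝ := C1 * lam4 - C2 * lam3 with hD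
  set Nm : ℝ := C1 * lam3 * (lam4 - tau4) * (lam4 + m * tau4) -
      C2 * lam4 * (lam3 - tau3) * (lam3 + m * tau3) with hNm
  have hD1pos : 0 < D1 := by nlinarith [mul_pos hC1 h2, mul_nonneg (neg_nonneg.2 hC2) h1.le]
  have hD2pos : 0 < D2 := by nlinarith [mul_pos hC1 h4, mul_nonneg (neg_nonneg.2 hC2) h3.le]
  have hDpos : 0 < D := by nlinarith [mul_pos hC1 hlam4, mul_nonneg (neg_nonneg.2 hC2) hlam3.le]
  have key : lam3 * lam4 * (D1 * D2) - Nm * D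
      = C1 * (-C2) * m * (lam3 * tau4 - lam4 * tau3) ^ 2 := by
    simp only [hD1, hD2, hD, hNm]; ring
  have hfr : K / D1 * (Nm / D2) = K * Nm / (D1 * D2) := div_mul_div_comm K D1 Nm D2
  have hDD : 0 < D1 * D2 := mul_pos hD1pos hD2pos
  constructor
  · rw [hfr]
    rw [div_le_div_iff₀ hDD hDpos]
    have hterm : 0 ≤ C1 * (-C2) * m * (lam3 * tau4 - lam4 * tau3) ^ 2 := by
      have := neg_nonneg.2 hC2
      positivity
    have hpoly : Nm * D ≤ lam3 * lam4 * (D1 * D2) := by linarith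
    calc K * Nm * D = K * (Nm * D) := by ring
      _ ≤ K * (lam3 * lam4 * (D1 * D2)) := mul_le_mul_of_nonneg_left hpoly hKpos.le
      _ = K * lam3 * lam4 * (D1 * D2) := by ring
  · intro hcond
    rw [hfr]
    rw [div_eq_div_iff hDD.ne' hDpos.ne']
    have h0 : lam3 * tau4 - lam4 * tau3 = 0 := by linarith [hcond]
    have hterm0 : C1 * (-C2) * m * (lam3 * tau4 - lam4 * tau3) ^ 2 = 0 := by
      rw [h0]; ring
    have hpe : Nm * D = lam3 * lam4 * (D1 * D2) := by linarith
    linear_combination K * hpe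
end

section
/- Let L ≥ 2 be an integer, let I, T, N, σ² be positive reals, and let λ3, λ4, τ3, τ4, C1, C2 be reals satisfying λ3 > 0, λ4 > 0, λ3 − τ3 > 0, λ4 − τ4 > 0, λ3 + (L−1)τ3 > 0, λ4 + (L−1)τ4 > 0, C1 > 0, and C2 ≤ 0. Define var_both = (I·T/(L·N))·σ²·(λ3 + (L−1)τ3)·(λ4 + (L−1)τ4) / [C1(λ4 + (L−1)τ4) − C2(λ3 + (L−1)τ3)] and var_ICC = ((I·T/N)·σ² / [C1(λ4 − τ4) − C2(λ3 − τ3)]) · ([C1·λ3·(λ4 − τ4)·(λ4 + (L−1)τ4) − C2·λ4·(λ3 − τ3)·(λ3 + (L−1)τ3)] / [C1(λ4 + (L−1)τ4) − C2(λ3 + (L−1)τ3)]). Then var_both < var_ICC. -/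
/-- Theorem 4, closed-cohort design: under common ICC values across endpoints, additionally
assuming a common standardized treatment effect strictly decreases the variance of the
(unscaled) l-th treatment effect estimator. -/
theorem common_effect_variance_lt_common_icc_variance_closed_cohort
    (L : ℕ) (hL : 2 ≤ L) (I T N σ2 : ℝ)
    (hI : 0 < I) (hT : 0 < T) (hN : 0 < N) (hσ2 : 0 < σ2)
    (lam3 lam4 tau3 tau4 C1 C2 : ℝ)
    (hlam3 : 0 < lam3) (hlam4 : 0 < lam4)
    (h1 : 0 < lam3 - tau3) (h2 : 0 < lam4 - tau4)
    (h3 : 0 < lam3 + ((L : ℝ) - 1) * tau3) (h4 : 0 < lam4 + ((L : ℝ) - 1) * tau4)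
    (hC1 : 0 < C1) (hC2 : C2 ≤ 0) :
    I * T / ((L : ℝ) * N) * σ2 * (lam3 + ((L : ℝ) - 1) * tau3) * (lam4 + ((L : ℝ) - 1) * tau4) /
        (C1 * (lam4 + ((L : ℝ) - 1) * tau4) - C2 * (lam3 + ((L : ℝ) - 1) * tau3)) <
      (I * T / N * σ2 / (C1 * (lam4 - tau4) - C2 * (lam3 - tau3))) *
        ((C1 * lam3 * (lam4 - tau4) * (lam4 + ((L : ℝ) - 1) * tau4) -
          C2 * lam4 * (lam3 - tau3) * (lam3 + ((L : ℝ) - 1) * tau3)) /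
         (C1 * (lam4 + ((L : ℝ) - 1) * tau4) - C2 * (lam3 + ((L : ℝ) - 1) * tau3))) := by
  have hL2 : (2:ℝ) ≤ (L:ℝ) := by exact_mod_cast hL
  have hL0 : (0:ℝ) < (L:ℝ) := by linarith
  set A3 := lam3 + ((L : ℝ) - 1) * tau3 with hA3
  set A4 := lam4 + ((L : ℝ) - 1) * tau4 with hA4
  set B3 := lam3 - tau3 with hB3
  set B4 := lam4 - tau4 with hB4
  have hD : 0 < C1 * A4 - C2 * A3 := by
    nlinarith [mul_pos hC1 h4, mul_nonpos_of_nonpos_of_nonneg hC2 h3.le]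
  have hE : 0 < C1 * B4 - C2 * B3 := by
    nlinarith [mul_pos hC1 h2, mul_nonpos_of_nonpos_of_nonneg hC2 h1.le]
  set D := C1 * A4 - C2 * A3 with hDdef
  set E := C1 * B4 - C2 * B3 with hEdef
  set num := C1 * lam3 * B4 * A4 - C2 * lam4 * B3 * A3 with hnum
  have key : (L:ℝ) * num - A3 * A4 * E = ((L:ℝ) - 1) * B3 * B4 * D := by
    rw [hnum, hEdef, hDdef, hA3, hA4, hB3, hB4]; ring
  have main : A3 * A4 * E < (L:ℝ) * num := by
    nlinarith [key, mul_pos (mul_pos (mul_pos (by linarith : (0:ℝ) < (L:ℝ)-1) h1) h2) hD]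
  have inner : A3 * A4 / ((L:ℝ) * D) < num / (E * D) := by
    rw [div_lt_div_iff₀ (by positivity) (by positivity)]
    calc A3 * A4 * (E * D) = (A3 * A4 * E) * D := by ring
      _ < ((L:ℝ) * num) * D := mul_lt_mul_of_pos_right main hD
      _ = num * ((L:ℝ) * D) := by ring
  have hK : 0 < I * T * σ2 / N := by positivity
  have step := mul_lt_mul_of_pos_left inner hK
  calc I * T / ((L : ℝ) * N) * σ2 * A3 * A4 / D
      = (I * T * σ2 / N) * (A3 * A4 / ((L:ℝ) * D)) := by
        field_simp
    _ < (I * T * σ2 / N) * (num / (E * D)) := step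
    _ = (I * T / N * σ2 / E) * (num / D) := by
        field_simp
end
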